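/- arXiv:0901.2315 — 2 statements merged into one kernel-verified Lean document; each statement's English description precedes it below -/
import Mathlib

section
/- Let α ∈ (0,2]. For every finite Borel measure μ on ℝ, every t > 0 and every x ∈ ℝ: ∫_ℝ p_t^α(x − y) μ(dy) ≥ p_1^α(1) · t^{−1/α} · μ(B_{t^{1/α}}(x)). -/
/-!
The scaling `p_t^α(x) = t^(-1/α) p_1^α(t^(-1/α) x)` reduces the bound to the fact that `p_1^α` is
nonnegative and radially nonincreasing: then `p_t^α(x - y) ≥ p_t^α(t^(1/α)) = t^(-1/α) p_1^α(1)`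
on the ball and `p_t^α(x - y) ≥ 0` off it.

Nonnegativity and radial monotonicity of the cosine transform hold for Gaussians, hence for
nonnegative Gaussian mixtures, and survive dominated pointwise limits. Writing `u = ξ²` and
`β = α/2`, the exponential series exhibits `exp(-σu - ∑ cₖ (1 - e^(-sₖu)))` as such a limit.
The sums `levySum r β u = ∑_{k ∈ ℤ} r^(-kβ) (1 - e^(-rᵏu))`, a geometric discretisation of the
Lévy–Khintchine integral of the Bernstein function `u^β`, satisfy
`levySum r β (r u) = r^β levySum r β u`, which squeezes `levySum r β u / levySum r β 1` between
`(u/r)^β` and `(r u)^β`. Letting the truncation grow, then `r → 1` and finally `σ → 0` yields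
`exp(-|ξ|^α)`.
-/

open MeasureTheory

/-- The symmetric α-stable heat kernel on ℝ:
`p_t^α(x) = (2π)⁻¹ ∫_ℝ cos(xξ) exp(−t|ξ|^α) dξ`. -/
noncomputable def stableKernel (α t x : ℝ) : ℝ :=
  (2 * Real.pi)⁻¹ * ∫ ξ : ℝ, Real.cos (x * ξ) * Real.exp (-t * |ξ| ^ α)

open Real Filter Topology
open scoped Nat

noncomputable def cosTransform (w : ℝ → ℝ) (x : ℝ) : ℝ :=
  ∫ ξ, cos (x * ξ) * w ξ

section CosTransform

variable {w w₁ w₂ : ℝ → ℝ}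

lemma integrable_cos_mul (hw : Integrable w) (x : ℝ) :
    Integrable fun ξ ↦ cos (x * ξ) * w ξ :=
  hw.bdd_mul (c := 1) (by fun_prop)
    (Eventually.of_forall fun ξ ↦ by simpa using abs_cos_le_one (x * ξ))

lemma cosTransform_add (hw₁ : Integrable w₁) (hw₂ : Integrable w₂) (x : ℝ) :
    cosTransform (fun ξ ↦ w₁ ξ + w₂ ξ) x = cosTransform w₁ x + cosTransform w₂ x := by
  simp only [cosTransform, mul_add]
  exact integral_add (integrable_cos_mul hw₁ x) (integrable_cos_mul hw₂ x)

lemma cosTransform_const_mul (c : ℝ) (x : ℝ) :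
    cosTransform (fun ξ ↦ c * w ξ) x = c * cosTransform w x := by
  simp only [cosTransform, ← integral_const_mul, mul_left_comm]

lemma cosTransform_comp_mul_left {c : ℝ} (hc : c ≠ 0) (x : ℝ) :
    cosTransform (fun ξ ↦ w (c * ξ)) x = |c⁻¹| * cosTransform w (c⁻¹ * x) := by
  rw [cosTransform, cosTransform, ← smul_eq_mul,
    ← Measure.integral_comp_mul_left (fun η ↦ cos (c⁻¹ * x * η) * w η) c]
  simp only [mul_assoc, inv_mul_cancel_left₀ hc, mul_left_comm c⁻¹ x]

lemma continuous_cosTransform (hw : Integrable w) : Continuous (cosTransform w) :=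
  continuous_of_dominated (fun x ↦ (integrable_cos_mul hw x).aestronglyMeasurable)
    (fun x ↦ Eventually.of_forall fun ξ ↦ by
      simpa [abs_mul] using mul_le_mul_of_nonneg_right (abs_cos_le_one (x * ξ)) (abs_nonneg (w ξ)))
    hw.norm (Eventually.of_forall fun ξ ↦ by fun_prop)

lemma cosTransform_gaussian {a : ℝ} (ha : 0 < a) (x : ℝ) :
    cosTransform (fun ξ ↦ exp (-a * ξ ^ 2)) x = √(π / a) * exp (-x ^ 2 / (4 * a)) := by
  have hre (ξ : ℝ) : cos (x * ξ) * exp (-a * ξ ^ 2) =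
      (Complex.exp (Complex.I * x * ξ) * Complex.exp (-a * ξ ^ 2)).re := by
    have h₁ : Complex.I * x * ξ = ((x * ξ : ℝ) : ℂ) * Complex.I := by push_cast; ring
    have h₂ : -(a : ℂ) * ξ ^ 2 = ((-a * ξ ^ 2 : ℝ) : ℂ) := by push_cast; ring
    rw [h₁, h₂, ← Complex.ofReal_exp, Complex.re_mul_ofReal, Complex.exp_ofReal_mul_I_re]
  have hint : Integrable fun ξ : ℝ ↦ Complex.exp (Complex.I * x * ξ) * Complex.exp (-a * ξ ^ 2) :=
    (integrable_cexp_quadratic (b := a) (by simpa using ha) (Complex.I * x) 0).congr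
      (Eventually.of_forall fun ξ ↦ by simp only [← Complex.exp_add]; ring_nf)
  have hpow : ((π : ℂ) / a) ^ (1 / 2 : ℂ) = ((√(π / a) : ℝ) : ℂ) := by
    rw [sqrt_eq_rpow, Complex.ofReal_cpow (by positivity)]
    push_cast; ring_nf
  simp only [cosTransform, hre]
  have hre_int := integral_re hint
  simp only [RCLike.re_to_complex] at hre_int
  rw [hre_int, fourierIntegral_gaussian (by simpa using ha), hpow]
  norm_cast

end CosTransform

structure HasUnimodalCosTransform (w : ℝ → ℝ) : Prop where
  integrable : Integrable w
  nonneg : ∀ x, 0 ≤ cosTransform w x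
  le_of_abs_le : ∀ ⦃u x : ℝ⦄, |u| ≤ |x| → cosTransform w x ≤ cosTransform w u

namespace HasUnimodalCosTransform

variable {w w₁ w₂ : ℝ → ℝ}

lemma congr (hw : HasUnimodalCosTransform w₁) (h : ∀ ξ, w₁ ξ = w₂ ξ) :
    HasUnimodalCosTransform w₂ :=
  funext h ▸ hw

lemma gaussian {a : ℝ} (ha : 0 < a) : HasUnimodalCosTransform fun ξ ↦ exp (-a * ξ ^ 2) where
  integrable := integrable_exp_neg_mul_sq ha
  nonneg x := by rw [cosTransform_gaussian ha]; positivity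
  le_of_abs_le u x hux := by
    simp only [cosTransform_gaussian ha]
    have : u ^ 2 ≤ x ^ 2 := sq_le_sq.2 hux
    gcongr

lemma add (h₁ : HasUnimodalCosTransform w₁) (h₂ : HasUnimodalCosTransform w₂) :
    HasUnimodalCosTransform fun ξ ↦ w₁ ξ + w₂ ξ where
  integrable := h₁.integrable.add h₂.integrable
  nonneg x := by
    rw [cosTransform_add h₁.integrable h₂.integrable]
    exact add_nonneg (h₁.nonneg x) (h₂.nonneg x)
  le_of_abs_le u x hux := by
    simp only [cosTransform_add h₁.integrable h₂.integrable]
    exact add_le_add (h₁.le_of_abs_le hux) (h₂.le_of_abs_le hux)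

lemma const_mul (hw : HasUnimodalCosTransform w) {c : ℝ} (hc : 0 ≤ c) :
    HasUnimodalCosTransform fun ξ ↦ c * w ξ where
  integrable := hw.integrable.const_mul c
  nonneg x := by rw [cosTransform_const_mul]; exact mul_nonneg hc (hw.nonneg x)
  le_of_abs_le u x hux := by
    simp only [cosTransform_const_mul]
    exact mul_le_mul_of_nonneg_left (hw.le_of_abs_le hux) hc

lemma comp_mul_left (hw : HasUnimodalCosTransform w) {c : ℝ} (hc : c ≠ 0) :
    HasUnimodalCosTransform fun ξ ↦ w (c * ξ) where
  integrable := hw.integrable.comp_mul_left' hc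
  nonneg x := by rw [cosTransform_comp_mul_left hc]; exact mul_nonneg (abs_nonneg _) (hw.nonneg _)
  le_of_abs_le u x hux := by
    simp only [cosTransform_comp_mul_left hc]
    refine mul_le_mul_of_nonneg_left (hw.le_of_abs_le ?_) (abs_nonneg _)
    simpa only [abs_mul] using mul_le_mul_of_nonneg_left hux (abs_nonneg c⁻¹)

lemma of_tendsto {ι : Type*} {l : Filter ι} [l.NeBot] [l.IsCountablyGenerated]
    {f : ι → ℝ → ℝ} {bound : ℝ → ℝ} (hf : ∀ i, HasUnimodalCosTransform (f i))
    (hbound : Integrable bound) (hle : ∀ i ξ, |f i ξ| ≤ bound ξ)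
    (hlim : ∀ ξ, Tendsto (f · ξ) l (𝓝 (w ξ))) : HasUnimodalCosTransform w := by
  have hmeas : AEStronglyMeasurable w :=
    aestronglyMeasurable_of_tendsto_ae l (fun i ↦ (hf i).integrable.1) (ae_of_all _ hlim)
  have hw_le (ξ : ℝ) : ‖w ξ‖ ≤ bound ξ :=
    le_of_tendsto (hlim ξ).abs (Eventually.of_forall fun i ↦ hle i ξ)
  have htransform (x : ℝ) : Tendsto (fun i ↦ cosTransform (f i) x) l (𝓝 (cosTransform w x)) :=
    tendsto_integral_filter_of_dominated_convergence bound
      (Eventually.of_forall fun i ↦ (integrable_cos_mul (hf i).integrable x).aestronglyMeasurable)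
      (Eventually.of_forall fun i ↦ Eventually.of_forall fun ξ ↦ by
        simpa [abs_mul] using
          mul_le_mul (abs_cos_le_one (x * ξ)) (hle i ξ) (abs_nonneg _) zero_le_one)
      hbound (Eventually.of_forall fun ξ ↦ (hlim ξ).const_mul _)
  exact {
    integrable := hbound.mono' hmeas (Eventually.of_forall hw_le)
    nonneg x := ge_of_tendsto (htransform x) (Eventually.of_forall fun i ↦ (hf i).nonneg x)
    le_of_abs_le u x hux := le_of_tendsto_of_tendsto (htransform x) (htransform u)
      (Eventually.of_forall fun i ↦ (hf i).le_of_abs_le hux) }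

lemma of_tendsto_exp_neg {ι : Type*} {l : Filter ι} [l.NeBot] [l.IsCountablyGenerated]
    {a : ι → ℝ → ℝ} {a₀ b : ℝ → ℝ} (ha : ∀ i, HasUnimodalCosTransform fun ξ ↦ exp (-a i ξ))
    (hb : Integrable fun ξ ↦ exp (-b ξ)) (hle : ∀ i ξ, b ξ ≤ a i ξ)
    (hlim : ∀ ξ, Tendsto (a · ξ) l (𝓝 (a₀ ξ))) : HasUnimodalCosTransform fun ξ ↦ exp (-a₀ ξ) :=
  of_tendsto ha hb (fun i ξ ↦ by simpa using hle i ξ)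
    fun ξ ↦ (continuous_exp.tendsto _).comp (hlim ξ).neg

end HasUnimodalCosTransform

inductive IsGaussianMixture : (ℝ → ℝ) → Prop
  | zero : IsGaussianMixture fun _ ↦ 0
  | add_gaussian {c a : ℝ} {w : ℝ → ℝ} (hc : 0 ≤ c) (ha : 0 < a) (hw : IsGaussianMixture w) :
      IsGaussianMixture fun ξ ↦ c * exp (-a * ξ ^ 2) + w ξ

namespace IsGaussianMixture

variable {w w₁ w₂ : ℝ → ℝ}

lemma congr (hw : IsGaussianMixture w₁) (h : ∀ ξ, w₁ ξ = w₂ ξ) : IsGaussianMixture w₂ :=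
  funext h ▸ hw

lemma gaussian {c a : ℝ} (hc : 0 ≤ c) (ha : 0 < a) :
    IsGaussianMixture fun ξ ↦ c * exp (-a * ξ ^ 2) :=
  (zero.add_gaussian hc ha).congr fun _ ↦ add_zero _

lemma hasUnimodalCosTransform (hw : IsGaussianMixture w) : HasUnimodalCosTransform w := by
  induction hw with
  | zero => exact (HasUnimodalCosTransform.gaussian one_pos).const_mul le_rfl |>.congr (by simp)
  | add_gaussian hc ha _ ih => exact ((HasUnimodalCosTransform.gaussian ha).const_mul hc).add ih

lemma nonneg (hw : IsGaussianMixture w) (ξ : ℝ) : 0 ≤ w ξ := by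
  induction hw with
  | zero => exact le_rfl
  | add_gaussian hc _ _ ih => positivity

lemma le_apply_zero (hw : IsGaussianMixture w) (ξ : ℝ) : w ξ ≤ w 0 := by
  induction hw with
  | zero => exact le_rfl
  | @add_gaussian c a _ hc ha _ ih =>
    have : exp (-a * ξ ^ 2) ≤ 1 := exp_le_one_iff.2 (by nlinarith [sq_nonneg ξ])
    simp only [zero_pow two_ne_zero, mul_zero, exp_zero, mul_one]
    exact add_le_add (mul_le_of_le_one_right hc this) ih

lemma add (h₁ : IsGaussianMixture w₁) (h₂ : IsGaussianMixture w₂) :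
    IsGaussianMixture fun ξ ↦ w₁ ξ + w₂ ξ := by
  induction h₁ with
  | zero => exact h₂.congr fun _ ↦ (zero_add _).symm
  | add_gaussian hc ha _ ih => exact (ih.add_gaussian hc ha).congr fun _ ↦ (add_assoc ..).symm

lemma gaussian_mul (hw : IsGaussianMixture w) {c a : ℝ} (hc : 0 ≤ c) (ha : 0 < a) :
    IsGaussianMixture fun ξ ↦ c * exp (-a * ξ ^ 2) * w ξ := by
  induction hw with
  | zero => exact zero.congr fun _ ↦ (mul_zero _).symm
  | @add_gaussian c' a' _ hc' ha' _ ih =>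
    refine (ih.add_gaussian (mul_nonneg hc hc') (add_pos ha ha')).congr fun ξ ↦ ?_
    rw [mul_add, neg_add, add_mul, exp_add]
    ring

lemma mul (h₁ : IsGaussianMixture w₁) (h₂ : IsGaussianMixture w₂) :
    IsGaussianMixture fun ξ ↦ w₁ ξ * w₂ ξ := by
  induction h₁ with
  | zero => exact zero.congr fun _ ↦ (zero_mul _).symm
  | add_gaussian hc ha _ ih =>
    exact ((h₂.gaussian_mul hc ha).add ih).congr fun _ ↦ (add_mul ..).symm

lemma gaussian_mul_pow (hw : IsGaussianMixture w) {c a : ℝ} (hc : 0 ≤ c) (ha : 0 < a) (n : ℕ) :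
    IsGaussianMixture fun ξ ↦ c * exp (-a * ξ ^ 2) * w ξ ^ n := by
  induction n with
  | zero => exact (gaussian hc ha).congr fun _ ↦ by simp
  | succ n ih => exact (ih.mul hw).congr fun _ ↦ by ring

lemma sum {ι : Type*} (s : Finset ι) {f : ι → ℝ → ℝ} (hf : ∀ i, IsGaussianMixture (f i)) :
    IsGaussianMixture fun ξ ↦ ∑ i ∈ s, f i ξ := by
  classical
  induction s using Finset.induction_on with
  | empty => exact zero.congr fun _ ↦ by simp
  | insert i s hi ih => exact ((hf i).add ih).congr fun _ ↦ by rw [Finset.sum_insert hi]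

end IsGaussianMixture

namespace HasUnimodalCosTransform

lemma gaussian_mul_exp {h : ℝ → ℝ} (hh : IsGaussianMixture h) {σ : ℝ} (hσ : 0 < σ) :
    HasUnimodalCosTransform fun ξ ↦ exp (-σ * ξ ^ 2) * exp (h ξ) := by
  have hseries (ξ : ℝ) : HasSum (fun n : ℕ ↦ exp (-σ * ξ ^ 2) * (h ξ ^ n / n !))
      (exp (-σ * ξ ^ 2) * exp (h ξ)) := by
    rw [exp_eq_exp_ℝ]
    exact (NormedSpace.expSeries_div_hasSum_exp (h ξ)).mul_left _
  refine of_tendsto (l := atTop) (f := fun s ξ ↦ ∑ n ∈ s, exp (-σ * ξ ^ 2) * (h ξ ^ n / n !))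
    (bound := fun ξ ↦ exp (h 0) * exp (-σ * ξ ^ 2)) (fun s ↦ ?_)
    ((integrable_exp_neg_mul_sq hσ).const_mul _) (fun s ξ ↦ ?_) fun ξ ↦ hseries ξ
  · refine (IsGaussianMixture.sum s fun n ↦ ?_).hasUnimodalCosTransform
    refine (hh.gaussian_mul_pow (c := (n ! : ℝ)⁻¹) (by positivity) hσ n).congr fun ξ ↦ ?_
    ring
  · have hterm (n : ℕ) : 0 ≤ exp (-σ * ξ ^ 2) * (h ξ ^ n / n !) := by
      have := hh.nonneg ξ
      positivity
    rw [abs_of_nonneg (Finset.sum_nonneg fun n _ ↦ hterm n), mul_comm (exp (h 0))]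
    calc ∑ n ∈ s, exp (-σ * ξ ^ 2) * (h ξ ^ n / n !)
        ≤ exp (-σ * ξ ^ 2) * exp (h ξ) := sum_le_hasSum s (fun n _ ↦ hterm n) (hseries ξ)
      _ ≤ exp (-σ * ξ ^ 2) * exp (h 0) := by gcongr; exact hh.le_apply_zero ξ

lemma exp_neg_mul_sq_add_sum {ι : Type*} (s : Finset ι) {σ : ℝ} (hσ : 0 < σ) {c a : ι → ℝ}
    (hc : ∀ i, 0 ≤ c i) (ha : ∀ i, 0 < a i) :
    HasUnimodalCosTransform fun ξ ↦
      exp (-(σ * ξ ^ 2 + ∑ i ∈ s, c i * (1 - exp (-a i * ξ ^ 2)))) := by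
  have hh := IsGaussianMixture.sum s fun i ↦ IsGaussianMixture.gaussian (hc i) (ha i)
  refine ((gaussian_mul_exp hh hσ).const_mul (exp_pos (-∑ i ∈ s, c i)).le).congr fun ξ ↦ ?_
  simp only [mul_sub, mul_one, Finset.sum_sub_distrib, ← exp_add]
  ring_nf

end HasUnimodalCosTransform

noncomputable def levySum (r β u : ℝ) : ℝ :=
  ∑' k : ℤ, (r ^ β) ^ (-k) * (1 - exp (-r ^ k * u))

section LevySum

variable {r β u v : ℝ}

lemma one_sub_exp_neg_zpow_mul_nonneg (hr : 0 < r) (hu : 0 ≤ u) (k : ℤ) :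
    0 ≤ 1 - exp (-r ^ k * u) := by
  have : 0 < r ^ k := zpow_pos hr k
  have : exp (-r ^ k * u) ≤ 1 := exp_le_one_iff.2 (by nlinarith)
  linarith

lemma levySum_nonneg (hr : 0 < r) (hu : 0 ≤ u) : 0 ≤ levySum r β u :=
  tsum_nonneg fun k ↦ mul_nonneg (by positivity) (one_sub_exp_neg_zpow_mul_nonneg hr hu k)

lemma levySum_zero : levySum r β 0 = 0 := by
  simp [levySum]

lemma summable_levySum (hr : 1 < r) (hβ : 0 < β) (hβ1 : β < 1) (hu : 0 ≤ u) :
    Summable fun k : ℤ ↦ (r ^ β) ^ (-k) * (1 - exp (-r ^ k * u)) := by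
  have hr0 : 0 < r := one_pos.trans hr
  have hrβ : 1 < r ^ β := one_lt_rpow hr hβ
  have hterm (k : ℤ) : 0 ≤ (r ^ β) ^ (-k) * (1 - exp (-r ^ k * u)) :=
    mul_nonneg (by positivity) (one_sub_exp_neg_zpow_mul_nonneg hr0 hu k)
  refine Summable.of_nat_of_neg ?_ ?_
  · refine .of_nonneg_of_le (fun n ↦ hterm n) (fun n ↦ ?_) (summable_geometric_of_lt_one
      (inv_nonneg.2 (by positivity)) (inv_lt_one_of_one_lt₀ hrβ))
    rw [zpow_neg, zpow_natCast, ← inv_pow]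
    exact mul_le_of_le_one_right (by positivity) (by linarith [exp_pos (-r ^ (n : ℤ) * u)])
  · have hq : r ^ β / r < 1 :=
      (div_lt_one hr0).2 (by simpa using rpow_lt_rpow_of_exponent_lt hr hβ1)
    refine .of_nonneg_of_le (fun n ↦ hterm _) (fun n ↦ ?_)
      ((summable_geometric_of_lt_one (by positivity) hq).mul_left u)
    have h1 : 1 - exp (-r ^ (-(n : ℤ)) * u) ≤ r ^ (-(n : ℤ)) * u := by
      linarith [add_one_le_exp (-r ^ (-(n : ℤ)) * u)]
    rw [neg_neg, zpow_natCast, div_pow]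
    rw [zpow_neg, zpow_natCast] at h1 ⊢
    calc (r ^ β) ^ n * (1 - exp (-(r ^ n)⁻¹ * u)) ≤ (r ^ β) ^ n * ((r ^ n)⁻¹ * u) := by gcongr
      _ = u * ((r ^ β) ^ n / r ^ n) := by ring

lemma levySum_mono (hr : 1 < r) (hβ : 0 < β) (hβ1 : β < 1) (hu : 0 ≤ u) (huv : u ≤ v) :
    levySum r β u ≤ levySum r β v := by
  refine Summable.tsum_le_tsum (fun k ↦ ?_) (summable_levySum hr hβ hβ1 hu)
    (summable_levySum hr hβ hβ1 (hu.trans huv))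
  have : 0 < r ^ k := zpow_pos (one_pos.trans hr) k
  refine mul_le_mul_of_nonneg_left (sub_le_sub_left (exp_le_exp.2 ?_) 1) (by positivity)
  nlinarith

lemma levySum_zpow_mul (hr : 0 < r) (u : ℝ) (j : ℤ) :
    levySum r β (r ^ j * u) = (r ^ β) ^ j * levySum r β u := by
  have hr0 : r ≠ 0 := hr.ne'
  have hrβ : r ^ β ≠ 0 := (rpow_pos_of_pos hr β).ne'
  rw [levySum, levySum, ← tsum_mul_left]
  conv_rhs => rw [← (Equiv.addRight j).tsum_eq]
  congr 1 with k
  simp only [Equiv.coe_addRight, zpow_add₀ hr0, neg_add, zpow_add₀ hrβ, zpow_neg]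
  field_simp

lemma levySum_one_pos (hr : 1 < r) (hβ : 0 < β) (hβ1 : β < 1) : 0 < levySum r β 1 := by
  refine lt_of_lt_of_le ?_ ((summable_levySum hr hβ hβ1 zero_le_one).le_tsum 0 fun k _ ↦
    mul_nonneg (by positivity) (one_sub_exp_neg_zpow_mul_nonneg (one_pos.trans hr) zero_le_one k))
  simp [exp_lt_one_iff]

lemma levySum_zpow (hr : 0 < r) (j : ℤ) : levySum r β (r ^ j) = (r ^ j) ^ β * levySum r β 1 := by
  rw [← mul_one (r ^ j), levySum_zpow_mul hr, rpow_zpow_comm hr.le, mul_one]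

lemma levySum_le (hr : 1 < r) (hβ : 0 < β) (hβ1 : β < 1) (hu : 0 ≤ u) :
    levySum r β u ≤ (r * u) ^ β * levySum r β 1 := by
  rcases hu.eq_or_lt with rfl | hu
  · simp [levySum_zero, zero_rpow hβ.ne']
  have hr0 : 0 < r := one_pos.trans hr
  obtain ⟨j, hju, huj⟩ := exists_mem_Ico_zpow hu hr
  calc levySum r β u ≤ levySum r β (r ^ (j + 1)) :=
        levySum_mono hr hβ hβ1 hu.le huj.le
    _ = (r ^ (j + 1)) ^ β * levySum r β 1 := levySum_zpow hr0 _
    _ ≤ (r * u) ^ β * levySum r β 1 := by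
        have := levySum_one_pos hr hβ hβ1
        rw [zpow_add_one₀ hr0.ne', mul_comm _ r]
        gcongr

lemma le_levySum (hr : 1 < r) (hβ : 0 < β) (hβ1 : β < 1) (hu : 0 ≤ u) :
    (u / r) ^ β * levySum r β 1 ≤ levySum r β u := by
  rcases hu.eq_or_lt with rfl | hu
  · simp [levySum_zero, zero_rpow hβ.ne']
  have hr0 : 0 < r := one_pos.trans hr
  obtain ⟨j, hju, huj⟩ := exists_mem_Ico_zpow hu hr
  calc (u / r) ^ β * levySum r β 1 ≤ (r ^ j) ^ β * levySum r β 1 := by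
        have := levySum_one_pos hr hβ hβ1
        rw [zpow_add_one₀ hr0.ne'] at huj
        gcongr
        exact (div_le_iff₀ hr0).2 huj.le
    _ = levySum r β (r ^ j) := (levySum_zpow hr0 _).symm
    _ ≤ levySum r β u := levySum_mono hr hβ hβ1 (zpow_pos hr0 _).le hju

lemma tendsto_levySum_div (hβ : 0 < β) (hβ1 : β < 1) (hu : 0 ≤ u) :
    Tendsto (fun r ↦ levySum r β u / levySum r β 1) (𝓝[>] 1) (𝓝 (u ^ β)) := by
  have hlim {f : ℝ → ℝ} (hf : ContinuousAt f 1) (hf1 : f 1 = u) :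
      Tendsto (fun r ↦ f r ^ β) (𝓝[>] 1) (𝓝 (u ^ β)) := by
    rw [← hf1]
    exact (hf.rpow_const (Or.inr hβ.le)).tendsto.mono_left nhdsWithin_le_nhds
  refine tendsto_of_tendsto_of_tendsto_of_le_of_le'
    (hlim (continuousAt_const.div continuousAt_id one_ne_zero) (div_one u))
    (hlim (continuousAt_id.mul continuousAt_const) (one_mul u)) ?_ ?_
  all_goals filter_upwards [self_mem_nhdsWithin] with r (hr : 1 < r)
  · exact (le_div_iff₀ (levySum_one_pos hr hβ hβ1)).2 (le_levySum hr hβ hβ1 hu)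
  · exact (div_le_iff₀ (levySum_one_pos hr hβ hβ1)).2 (levySum_le hr hβ hβ1 hu)

end LevySum

lemma integrable_exp_neg_abs_rpow {p : ℝ} (hp : 0 < p) :
    Integrable fun x : ℝ ↦ exp (-|x| ^ p) := by
  have := integrable_fun_norm_addHaar (volume : Measure ℝ) (f := fun y ↦ exp (-y ^ p))
  simp only [Module.finrank_self, norm_eq_abs, tsub_self, pow_zero, one_smul] at this
  exact this.2 (by simpa using integrableOn_rpow_mul_exp_neg_rpow (s := 0) (by norm_num) hp)

lemma sq_rpow_eq_abs_rpow (x p : ℝ) : (x ^ 2) ^ p = |x| ^ (2 * p) := by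
  rw [← sq_abs, ← rpow_natCast, ← rpow_mul (abs_nonneg x), Nat.cast_ofNat]

namespace HasUnimodalCosTransform

variable {σ r β : ℝ}

lemma exp_neg_mul_sq_add_levySum (hσ : 0 < σ) (hr : 1 < r) (hβ : 0 < β) (hβ1 : β < 1) :
    HasUnimodalCosTransform fun ξ ↦ exp (-(σ * ξ ^ 2 + levySum r β (ξ ^ 2) / levySum r β 1)) := by
  have hr0 : 0 < r := one_pos.trans hr
  have hL := levySum_one_pos hr hβ hβ1
  have hc (k : ℤ) : 0 ≤ (r ^ β) ^ (-k) / levySum r β 1 := by positivity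
  refine of_tendsto_exp_neg (l := atTop)
    (a := fun s ξ ↦
      σ * ξ ^ 2 + ∑ k ∈ s, (r ^ β) ^ (-k) / levySum r β 1 * (1 - exp (-r ^ k * ξ ^ 2)))
    (fun s ↦ exp_neg_mul_sq_add_sum s hσ hc fun k ↦ zpow_pos hr0 k)
    (b := fun ξ ↦ σ * ξ ^ 2) (by simpa using integrable_exp_neg_mul_sq hσ)
    (fun s ξ ↦ le_add_of_nonneg_right (Finset.sum_nonneg fun k _ ↦
      mul_nonneg (hc k) (one_sub_exp_neg_zpow_mul_nonneg hr0 (sq_nonneg ξ) k))) fun ξ ↦ ?_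
  have := ((summable_levySum hr hβ hβ1 (sq_nonneg ξ)).hasSum.div_const (levySum r β 1))
  simp only [mul_div_right_comm] at this
  exact this.const_add _

lemma exp_neg_mul_sq_add_rpow (hσ : 0 < σ) (hβ : 0 < β) (hβ1 : β < 1) :
    HasUnimodalCosTransform fun ξ ↦ exp (-(σ * ξ ^ 2 + (ξ ^ 2) ^ β)) := by
  have hr1 (n : ℕ) : 1 < 1 + 1 / ((n : ℝ) + 1) := lt_add_of_pos_right 1 (by positivity)
  have hr : Tendsto (fun n : ℕ ↦ 1 + 1 / ((n : ℝ) + 1)) atTop (𝓝[>] 1) :=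
    tendsto_nhdsWithin_iff.2
      ⟨by simpa using tendsto_one_div_add_atTop_nhds_zero_nat.const_add (1 : ℝ),
        Eventually.of_forall hr1⟩
  refine of_tendsto_exp_neg (l := atTop) (fun n ↦ exp_neg_mul_sq_add_levySum hσ (hr1 n) hβ hβ1)
    (b := fun ξ ↦ σ * ξ ^ 2) (by simpa using integrable_exp_neg_mul_sq hσ)
    (fun n ξ ↦ le_add_of_nonneg_right (div_nonneg (levySum_nonneg (one_pos.trans (hr1 n))
      (sq_nonneg ξ)) (levySum_one_pos (hr1 n) hβ hβ1).le))
    fun ξ ↦ ((tendsto_levySum_div hβ hβ1 (sq_nonneg ξ)).comp hr).const_add _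

lemma exp_neg_sq_rpow (hβ : β ∈ Set.Ioc 0 1) :
    HasUnimodalCosTransform fun ξ ↦ exp (-(ξ ^ 2) ^ β) := by
  obtain ⟨hβ, hβ1 | rfl⟩ := hβ.imp_right LE.le.lt_or_eq
  · refine of_tendsto_exp_neg (l := atTop)
      (fun n : ℕ ↦ exp_neg_mul_sq_add_rpow (σ := 1 / ((n : ℝ) + 1)) (by positivity) hβ hβ1)
      (b := fun ξ ↦ (ξ ^ 2) ^ β) ?_ (fun n ξ ↦ le_add_of_nonneg_left (by positivity))
      fun ξ ↦ by
        simpa using (tendsto_one_div_add_atTop_nhds_zero_nat.mul_const (ξ ^ 2)).add_const _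
    simpa [sq_rpow_eq_abs_rpow] using integrable_exp_neg_abs_rpow (mul_pos two_pos hβ)
  · exact (gaussian one_pos).congr fun ξ ↦ by simp

lemma exp_neg_abs_rpow {α : ℝ} (hα : α ∈ Set.Ioc 0 2) :
    HasUnimodalCosTransform fun ξ ↦ exp (-|ξ| ^ α) :=
  (exp_neg_sq_rpow (β := α / 2) ⟨by linarith [hα.1], by linarith [hα.2]⟩).congr fun ξ ↦ by
    rw [sq_rpow_eq_abs_rpow, mul_div_cancel₀ _ two_ne_zero]

end HasUnimodalCosTransform

section StableKernel

variable {α t : ℝ}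

lemma exp_neg_mul_abs_rpow_eq (hα : α ≠ 0) (ht : 0 < t) (ξ : ℝ) :
    exp (-t * |ξ| ^ α) = exp (-|t ^ (1 / α) * ξ| ^ α) := by
  have hc : 0 < t ^ (1 / α) := rpow_pos_of_pos ht _
  rw [abs_mul, abs_of_pos hc, mul_rpow hc.le (abs_nonneg ξ), ← rpow_mul ht.le,
    one_div_mul_cancel hα, rpow_one, neg_mul]

lemma integrable_exp_neg_mul_abs_rpow (hα : 0 < α) (ht : 0 < t) :
    Integrable fun ξ ↦ exp (-t * |ξ| ^ α) :=
  ((integrable_exp_neg_abs_rpow hα).comp_mul_left' (rpow_pos_of_pos ht (1 / α)).ne').congr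
    (ae_of_all _ fun ξ ↦ (exp_neg_mul_abs_rpow_eq hα.ne' ht ξ).symm)

lemma HasUnimodalCosTransform.exp_neg_mul_abs_rpow (hα : α ∈ Set.Ioc 0 2) (ht : 0 < t) :
    HasUnimodalCosTransform fun ξ ↦ exp (-t * |ξ| ^ α) :=
  ((exp_neg_abs_rpow hα).comp_mul_left (rpow_pos_of_pos ht (1 / α)).ne').congr fun ξ ↦
    (exp_neg_mul_abs_rpow_eq hα.1.ne' ht ξ).symm

lemma stableKernel_eq_cosTransform (α t x : ℝ) :
    stableKernel α t x = (2 * π)⁻¹ * cosTransform (fun ξ ↦ exp (-t * |ξ| ^ α)) x :=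
  rfl

lemma stableKernel_nonneg (hα : α ∈ Set.Ioc 0 2) (ht : 0 < t) (x : ℝ) : 0 ≤ stableKernel α t x :=
  mul_nonneg (by positivity) ((HasUnimodalCosTransform.exp_neg_mul_abs_rpow hα ht).nonneg x)

lemma stableKernel_le_of_abs_le (hα : α ∈ Set.Ioc 0 2) (ht : 0 < t) {u x : ℝ} (hux : |u| ≤ |x|) :
    stableKernel α t x ≤ stableKernel α t u :=
  mul_le_mul_of_nonneg_left
    ((HasUnimodalCosTransform.exp_neg_mul_abs_rpow hα ht).le_of_abs_le hux) (by positivity)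

lemma continuous_stableKernel (hα : 0 < α) (ht : 0 < t) : Continuous (stableKernel α t) :=
  continuous_const.mul (continuous_cosTransform (integrable_exp_neg_mul_abs_rpow hα ht))

lemma stableKernel_rpow_one_div (hα : α ≠ 0) (ht : 0 < t) :
    stableKernel α t (t ^ (1 / α)) = t ^ (-(1 / α)) * stableKernel α 1 1 := by
  have hc : 0 < t ^ (1 / α) := rpow_pos_of_pos ht _
  simp only [stableKernel_eq_cosTransform, exp_neg_mul_abs_rpow_eq hα ht, neg_one_mul]
  rw [cosTransform_comp_mul_left (w := fun ξ ↦ exp (-|ξ| ^ α)) hc.ne', inv_mul_cancel₀ hc.ne',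
    abs_inv, abs_of_pos hc, ← rpow_neg ht.le]
  ring

end StableKernel

theorem stable_kernel_ball_lower_bound (α : ℝ) (hα : α ∈ Set.Ioc (0:ℝ) 2)
    (μ : Measure ℝ) [IsFiniteMeasure μ] (t : ℝ) (ht : 0 < t) (x : ℝ) :
    stableKernel α 1 1 * t ^ (-(1 / α)) * (μ (Metric.ball x (t ^ (1 / α)))).toReal ≤
      ∫ y : ℝ, stableKernel α t (x - y) ∂μ := by
  set R := t ^ (1 / α)
  have hint : Integrable (fun y ↦ stableKernel α t (x - y)) μ :=
    .of_bound ((continuous_stableKernel hα.1 ht).comp (continuous_sub_left x)).aestronglyMeasurable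
      (stableKernel α t 0) (ae_of_all _ fun y ↦ by
        rw [norm_of_nonneg (stableKernel_nonneg hα ht _)]
        exact stableKernel_le_of_abs_le hα ht (by simp))
  have hball (y : ℝ) (hy : y ∈ Metric.ball x R) :
      stableKernel α t R ≤ stableKernel α t (x - y) := by
    refine stableKernel_le_of_abs_le hα ht ?_
    rw [abs_of_pos (rpow_pos_of_pos ht _), abs_sub_comm, ← Real.dist_eq]
    exact (Metric.mem_ball.1 hy).le
  rw [mul_comm (stableKernel α 1 1), ← stableKernel_rpow_one_div hα.1.ne' ht, ← measureReal_def]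
  calc stableKernel α t R * μ.real (Metric.ball x R)
      ≤ ∫ y in Metric.ball x R, stableKernel α t (x - y) ∂μ :=
        setIntegral_ge_of_const_le_real measurableSet_ball (measure_ne_top _ _) hball
          hint.integrableOn
    _ ≤ ∫ y, stableKernel α t (x - y) ∂μ :=
        setIntegral_le_integral hint (ae_of_all _ fun y ↦ stableKernel_nonneg hα ht _)
end

section
/- For all a, b, q, δ > 0 the following holds: the series S_k := Σ_{n=1}^∞ ((a n^{−q}) / k)^{b k n^{δ}} converges for all sufficiently large k > 0, and lim_{k→∞} S_k = 0. -/
/-!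
Once `k ≥ 2a` the base is at most `1/2`, and since `n ^ δ ≥ 1` the exponent may be lowered to
`b k`. This gives the termwise bound `(1/2) ^ (b k) * (n + 1) ^ (-q b k)`, and once `q b k ≥ 2`
the series is dominated by `(1/2) ^ (b k)` times the convergent series `∑ (n + 1) ^ (-2)`.
-/

open Filter Topology Real

lemma summable_nat_add_one_rpow_neg {p : ℝ} (hp : 1 < p) :
    Summable fun n : ℕ => ((n : ℝ) + 1) ^ (-p) := by
  have := (summable_nat_add_iff 1).2 (Real.summable_nat_rpow.2 (neg_lt_neg hp))
  simpa using this

lemma mul_rpow_neg_div_rpow_le {a k q e δ p m : ℝ} (ha : 0 < a) (hq : 0 ≤ q) (he : 0 ≤ e)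
    (hδ : 0 ≤ δ) (hm : 1 ≤ m) (hk : 2 * a ≤ k) (hp : p ≤ q * e) :
    (a * m ^ (-q) / k) ^ (e * m ^ δ) ≤ (1 / 2) ^ e * m ^ (-p) := by
  have hk0 : 0 < k := by linarith
  have hm0 : 0 < m := by linarith
  have hmq : m ^ (-q) ≤ 1 := rpow_le_one_of_one_le_of_nonpos hm (neg_nonpos.2 hq)
  have hbase : a * m ^ (-q) / k ≤ 1 / 2 := by
    rw [div_le_iff₀ hk0]
    nlinarith [rpow_pos_of_pos hm0 (-q)]
  have hak : a / k ≤ 1 / 2 := by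
    rw [div_le_iff₀ hk0]
    linarith
  calc (a * m ^ (-q) / k) ^ (e * m ^ δ)
      ≤ (a * m ^ (-q) / k) ^ e :=
        rpow_le_rpow_of_exponent_ge (by positivity) (hbase.trans (by norm_num))
          (le_mul_of_one_le_right he (one_le_rpow hm hδ))
    _ = (a / k) ^ e * m ^ (-q * e) := by
        rw [mul_div_right_comm, mul_rpow (by positivity) (by positivity), ← rpow_mul hm0.le]
    _ ≤ (1 / 2) ^ e * m ^ (-p) := by
        gcongr
        linarith

lemma tendsto_tsum_zero_of_le_mul {α ι : Type*} {l : Filter α} {f : α → ι → ℝ} {c : α → ℝ}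
    {g : ι → ℝ} (hg : Summable g) (hc : Tendsto c l (𝓝 0))
    (hf : ∀ᶠ k in l, ∀ n, 0 ≤ f k n ∧ f k n ≤ c k * g n) :
    Tendsto (fun k => ∑' n, f k n) l (𝓝 0) := by
  have hlim : Tendsto (fun k => c k * ∑' n, g n) l (𝓝 0) := by
    simpa using hc.mul_const (∑' n, g n)
  refine tendsto_of_tendsto_of_tendsto_of_le_of_le' tendsto_const_nhds hlim ?_ ?_
  · filter_upwards [hf] with k hk
    exact tsum_nonneg fun n => (hk n).1
  · filter_upwards [hf] with k hk
    rw [← tsum_mul_left]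
    exact Summable.tsum_le_tsum (fun n => (hk n).2)
      (.of_nonneg_of_le (fun n => (hk n).1) (fun n => (hk n).2) (hg.mul_left (c k)))
      (hg.mul_left (c k))

theorem series_tendsto_zero (a b q δ : ℝ) (ha : 0 < a) (hb : 0 < b)
    (hq : 0 < q) (hδ : 0 < δ) :
    (∃ k₀ : ℝ, 0 < k₀ ∧ ∀ k : ℝ, k₀ ≤ k →
      Summable (fun n : ℕ =>
        (a * ((n : ℝ) + 1) ^ (-q) / k) ^ (b * k * ((n : ℝ) + 1) ^ δ))) ∧
    Filter.Tendsto
      (fun k : ℝ => ∑' n : ℕ,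
        (a * ((n : ℝ) + 1) ^ (-q) / k) ^ (b * k * ((n : ℝ) + 1) ^ δ))
      Filter.atTop (nhds 0) := by
  set k₀ := max (2 * a) (2 / (q * b))
  have hk₀ : 0 < k₀ := lt_max_of_lt_left (by linarith)
  have hbound : ∀ k, k₀ ≤ k → ∀ n : ℕ,
      0 ≤ (a * ((n : ℝ) + 1) ^ (-q) / k) ^ (b * k * ((n : ℝ) + 1) ^ δ) ∧
      (a * ((n : ℝ) + 1) ^ (-q) / k) ^ (b * k * ((n : ℝ) + 1) ^ δ) ≤
        (1 / 2) ^ (b * k) * ((n : ℝ) + 1) ^ (-(2 : ℝ)) := by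
    intro k hk n
    have hk0 : 0 < k := hk₀.trans_le hk
    have hqbk : 2 ≤ q * (b * k) := by
      have := (le_max_right _ _).trans hk
      rw [div_le_iff₀ (by positivity)] at this
      linarith
    refine ⟨rpow_nonneg (by positivity) _, mul_rpow_neg_div_rpow_le ha hq.le (by positivity)
      hδ.le (by simp) ((le_max_left _ _).trans hk) hqbk⟩
  have hg := summable_nat_add_one_rpow_neg (p := 2) one_lt_two
  refine ⟨⟨k₀, hk₀, fun k hk => ?_⟩,
    tendsto_tsum_zero_of_le_mul (c := fun k => (1 / 2) ^ (b * k)) hg ?_ ?_⟩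
  · exact .of_nonneg_of_le (fun n => (hbound k hk n).1) (fun n => (hbound k hk n).2)
      (hg.mul_left _)
  · exact (tendsto_rpow_atTop_of_base_lt_one _ (by norm_num) (by norm_num)).comp
      (tendsto_id.const_mul_atTop hb)
  · filter_upwards [eventually_ge_atTop k₀] using hbound
end
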